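/- Let (X,d) be a compact metric space and f : X → X a homeomorphism satisfying the closing property: for every ε > 0 there exists δ ∈ (0,ε) such that d(x, f^n x) < δ for some n ≥ 1 implies there is a periodic point p with d(p,x) ≤ ε. Then the topological entropy of f equals the topological entropy of f restricted to the closure of the set of periodic points of f. -/

import Mathlib

open Filter Topology MeasureTheory

/-- `E` is an `(ε,n)`-separated set for `f`. -/
def IsSeparated {X : Type*} [MetricSpace X] (f : X → X) (ε : ℝ) (n : ℕ) (E : Set X) : Prop :=
  ∀ x ∈ E, ∀ y ∈ E, x ≠ y → ∃ k < n, ε < dist (f^[k] x) (f^[k] y)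

/-- Maximal cardinality of an `(ε,n)`-separated set. -/
noncomputable def sepCount {X : Type*} [MetricSpace X] (f : X → X) (ε : ℝ) (n : ℕ) : ℕ :=
  sSup {m : ℕ | ∃ E : Finset X, IsSeparated f ε n ↑E ∧ E.card = m}

/-- Exponential growth rate of `(ε,n)`-separated sets. -/
noncomputable def entSep {X : Type*} [MetricSpace X] (f : X → X) (ε : ℝ) : ℝ :=
  Filter.limsup (fun n : ℕ => Real.log (sepCount f ε n) / n) Filter.atTop

/-- Topological entropy via separated sets: the limit as `ε → 0` (equivalently, the
supremum over `ε > 0`, by monotonicity) of the growth rate of `(ε,n)`-separated sets. -/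
noncomputable def topEnt {X : Type*} [MetricSpace X] (f : X → X) : ℝ :=
  ⨆ ε : {e : ℝ // 0 < e}, entSep f ε.1

/-- Growth rate of periodic points: `limsup (1/n) log card Fix(fⁿ)`. -/
noncomputable def perGrowth {X : Type*} [MetricSpace X] (f : X → X) : ℝ :=
  Filter.limsup (fun n : ℕ => Real.log (({x : X | f^[n] x = x}).ncard) / n) Filter.atTop

/-!
Restricting to `P` can only lower the growth of separated sets, so the content is the reverse
inequality. Fix `ε` and a block length `m`, and cut an orbit segment of length `b * m` into `b`
blocks. By uniform continuity, a block starting `η`-close to `P` is `ε`-shadowed by an orbit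
segment of `P`, hence is described up to `2ε` by a point of an `(ε, m)`-spanning set of `f|P`.
By the closing property an orbit comes `η`-far from the periodic points only a bounded number `r`
of times, since two far visits at close-by points would be closed up to a periodic orbit near the
first one; so at most `r` blocks start far from `P`, and these are coded by a fixed spanning set
of `f`. Hence `sepCount f (4ε) (b * m) ≤ C * (sepCount (f|P) ε m + 1) ^ b`, which gives
`entSep f (4ε) ≤ log (sepCount (f|P) ε m + 1) / m` for every `m`, and thus
`entSep f (4ε) ≤ entSep (f|P) ε`.
-/

open Function

/-- The values of `u` on `D`, listed in increasing order of the argument and padded with `none`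
to length `r`. -/
def sortedValues {ι α : Type*} [LinearOrder ι] (r : ℕ) (D : Finset ι) (u : ι → α) :
    Fin r → Option α :=
  fun i => (D.sort (· ≤ ·))[i.1]?.map u

lemma eqOn_of_sortedValues_eq {ι α : Type*} [LinearOrder ι] {r : ℕ} {D : Finset ι}
    {u v : ι → α} (hD : D.card ≤ r) (h : sortedValues r D u = sortedValues r D v) :
    Set.EqOn u v D := by
  intro j hj
  obtain ⟨i, hi, rfl⟩ := List.mem_iff_getElem.1 ((Finset.mem_sort (r := (· ≤ ·))).2 hj)
  have hir : i < r := lt_of_lt_of_le (by simpa using hi) hD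
  simpa [sortedValues, List.getElem?_eq_getElem hi] using congrFun h ⟨i, hir⟩

lemma forall_lt_mul_of_forall_blocks {p : ℕ → Prop} {b m : ℕ}
    (h : ∀ j < b, ∀ i < m, p (i + j * m)) : ∀ k < b * m, p k := by
  intro k hk
  have hm : 0 < m := Nat.pos_of_mul_pos_left (Nat.zero_lt_of_lt hk)
  rw [← Nat.mod_add_div' k m]
  exact h _ ((Nat.div_lt_iff_lt_mul hm).2 hk) _ (Nat.mod_lt k hm)

lemma exists_finset_dist_lt {Y : Type*} [MetricSpace Y] [CompactSpace Y] {d : ℝ} (hd : 0 < d) :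
    ∃ (A : Finset Y) (c : Y → A), ∀ y : Y, dist y (c y) < d := by
  obtain ⟨t, -, htf, hcov⟩ := finite_cover_balls_of_compact (isCompact_univ (X := Y)) hd
  have h : ∀ y : Y, ∃ a : htf.toFinset, dist y a < d := fun y => by
    obtain ⟨a, ha, hya⟩ := Set.mem_iUnion₂.1 (hcov (Set.mem_univ y))
    exact ⟨⟨a, htf.mem_toFinset.2 ha⟩, hya⟩
  choose c hc using h
  exact ⟨_, c, hc⟩

lemma Real.log_natCast_mono {a b : ℕ} (h : a ≤ b) : Real.log a ≤ Real.log b := by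
  rcases a.eq_zero_or_pos with rfl | ha
  · simpa using Real.log_natCast_nonneg b
  · exact Real.log_le_log (by exact_mod_cast ha) (by exact_mod_cast h)

lemma Real.log_natCast_succ_le (s : ℕ) : Real.log (s + 1) ≤ Real.log 2 + Real.log s := by
  rcases s.eq_zero_or_pos with rfl | hs
  · simpa using Real.log_nonneg one_le_two
  · have hs' : (1 : ℝ) ≤ s := by exact_mod_cast hs
    rw [← Real.log_mul two_ne_zero (by positivity)]
    exact Real.log_le_log (by positivity) (by linarith)

lemma limsup_le_of_le_add_div {u : ℕ → ℝ} {a K : ℝ} (hu : ∀ n, 0 ≤ u n)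
    (h : ∀ n, 1 ≤ n → u n ≤ a + K / n) : limsup u atTop ≤ a := by
  have hlim : Tendsto (fun n : ℕ => a + K / n) atTop (𝓝 a) := by
    simpa using tendsto_const_nhds.add (tendsto_const_div_atTop_nhds_zero_nat K)
  calc limsup u atTop ≤ limsup (fun n : ℕ => a + K / n) atTop :=
        limsup_le_limsup ((eventually_ge_atTop 1).mono h)
          (isBoundedUnder_of ⟨0, hu⟩).isCoboundedUnder_le hlim.isBoundedUnder_le
    _ = a := hlim.limsup_eq

lemma le_limsup_of_le_add_div {u : ℕ → ℝ} {c K B : ℝ} (hu : ∀ n, u n ≤ B)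
    (h : ∀ n, 1 ≤ n → c ≤ u n + K / n) : c ≤ limsup u atTop := by
  have hlim : Tendsto (fun n : ℕ => c - K / n) atTop (𝓝 c) := by
    simpa using tendsto_const_nhds.sub (tendsto_const_div_atTop_nhds_zero_nat K)
  calc c = limsup (fun n : ℕ => c - K / n) atTop := hlim.limsup_eq.symm
    _ ≤ limsup u atTop :=
        limsup_le_limsup ((eventually_ge_atTop 1).mono fun n hn => by linarith [h n hn])
          hlim.isBoundedUnder_ge.isCoboundedUnder_le (isBoundedUnder_of ⟨B, hu⟩)

lemma bddAbove_range_of_forall_exists_le {ι κ : Sort*} {u : ι → ℝ} {v : κ → ℝ}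
    (huv : ∀ i, ∃ j, u i ≤ v j) (hv : BddAbove (Set.range v)) : BddAbove (Set.range u) := by
  obtain ⟨c, hc⟩ := hv
  exact ⟨c, Set.forall_mem_range.2 fun i => (huv i).elim fun j h => h.trans (hc ⟨j, rfl⟩)⟩

lemma Real.iSup_eq_iSup_of_forall_exists_le {ι κ : Sort*} [Nonempty ι] [Nonempty κ]
    {u : ι → ℝ} {v : κ → ℝ} (huv : ∀ i, ∃ j, u i ≤ v j) (hvu : ∀ j, ∃ i, v j ≤ u i) :
    ⨆ i, u i = ⨆ j, v j := by
  -- an unbounded family has junk supremum `0`, and the two families are unbounded together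
  by_cases hv : BddAbove (Set.range v)
  · exact le_antisymm (ciSup_mono_of_forall_exists hv huv)
      (ciSup_mono_of_forall_exists (bddAbove_range_of_forall_exists_le huv hv) hvu)
  · rw [Real.iSup_of_not_bddAbove hv, Real.iSup_of_not_bddAbove
      fun hu => hv (bddAbove_range_of_forall_exists_le hvu hu)]

section Separated

variable {Y : Type*} [MetricSpace Y] {T : Y → Y} {ε : ℝ} {n : ℕ}

lemma isSeparated_empty : IsSeparated T ε n ((∅ : Finset Y) : Set Y) := fun _ hx => by simp at hx

lemma IsSeparated.mono_length {E : Set Y} (hE : IsSeparated T ε n E) {n' : ℕ} (hn : n ≤ n') :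
    IsSeparated T ε n' E :=
  fun x hx y hy hxy => (hE x hx y hy hxy).imp fun _ ⟨hk, h⟩ => ⟨hk.trans_le hn, h⟩

lemma IsSeparated.card_le_card_of_code {β : Type*} [Fintype β] (Φ : Y → β)
    (hΦ : ∀ x y, Φ x = Φ y → ∀ k < n, dist (T^[k] x) (T^[k] y) ≤ ε) {E : Finset Y}
    (hE : IsSeparated T ε n E) : E.card ≤ Fintype.card β := by
  refine (Finset.card_le_card_of_injOn Φ (fun _ _ => Finset.mem_univ _) fun x hx y hy hxy => ?_)
    |>.trans_eq Finset.card_univ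
  by_contra hne
  obtain ⟨k, hk, hsep⟩ := hE x hx y hy hne
  exact (hΦ x y hxy k hk).not_gt hsep

lemma IsSeparated.image {X : Type*} [MetricSpace X] {f : X → X} {φ : Y → X} (hφ : Isometry φ)
    (hfT : Semiconj φ T f) {E : Set Y} (hE : IsSeparated T ε n E) :
    IsSeparated f ε n (φ '' E) := by
  rintro _ ⟨x, hx, rfl⟩ _ ⟨y, hy, rfl⟩ hxy
  obtain ⟨k, hk, h⟩ := hE x hx y hy (ne_of_apply_ne φ hxy)
  refine ⟨k, hk, ?_⟩
  rwa [← (hfT.iterate_right k).eq, ← (hfT.iterate_right k).eq, hφ.dist_eq]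

lemma sepCount_le_of_forall_card_le {N : ℕ}
    (h : ∀ E : Finset Y, IsSeparated T ε n E → E.card ≤ N) : sepCount T ε n ≤ N :=
  csSup_le ⟨0, ∅, isSeparated_empty, rfl⟩ (by rintro _ ⟨E, hE, rfl⟩; exact h E hE)

lemma log_sepCount_div_nonneg (T : Y → Y) (ε : ℝ) (n : ℕ) :
    0 ≤ Real.log (sepCount T ε n) / n :=
  div_nonneg (Real.log_natCast_nonneg _) n.cast_nonneg

variable [CompactSpace Y]

lemma exists_forall_isSeparated_card_le_pow (T : Y → Y) (hε : 0 < ε) :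
    ∃ N : ℕ, ∀ n (E : Finset Y), IsSeparated T ε n E → E.card ≤ N ^ n := by
  obtain ⟨A, c, hc⟩ := exists_finset_dist_lt (Y := Y) (half_pos hε)
  refine ⟨A.card, fun n E hE => ?_⟩
  have hcode : ∀ x y, (fun k : Fin n => c (T^[k] x)) = (fun k : Fin n => c (T^[k] y)) →
      ∀ k < n, dist (T^[k] x) (T^[k] y) ≤ ε := by
    intro x y hxy k hk
    have hx := hc (T^[k] x)
    rw [congrFun hxy ⟨k, hk⟩] at hx
    linarith [hc (T^[k] y), dist_triangle_right (T^[k] x) (T^[k] y) (c (T^[k] y))]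
  simpa using hE.card_le_card_of_code _ hcode

lemma bddAbove_sepCounts (hε : 0 < ε) (n : ℕ) :
    BddAbove {m : ℕ | ∃ E : Finset Y, IsSeparated T ε n ↑E ∧ E.card = m} := by
  obtain ⟨N, hN⟩ := exists_forall_isSeparated_card_le_pow T hε
  exact ⟨N ^ n, by rintro _ ⟨E, hE, rfl⟩; exact hN n E hE⟩

lemma IsSeparated.card_le_sepCount (hε : 0 < ε) {E : Finset Y} (hE : IsSeparated T ε n E) :
    E.card ≤ sepCount T ε n :=
  le_csSup (bddAbove_sepCounts hε n) ⟨E, hE, rfl⟩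

lemma sepCount_mono_length (hε : 0 < ε) {n' : ℕ} (hn : n ≤ n') :
    sepCount T ε n ≤ sepCount T ε n' :=
  sepCount_le_of_forall_card_le fun _ hE => (hE.mono_length hn).card_le_sepCount hε

lemma exists_sepCount_le_pow (T : Y → Y) (hε : 0 < ε) : ∃ N : ℕ, ∀ n, sepCount T ε n ≤ N ^ n :=
  (exists_forall_isSeparated_card_le_pow T hε).imp fun _ hN n =>
    sepCount_le_of_forall_card_le (hN n)

/-- A maximal separated set is spanning. -/
lemma exists_finset_card_eq_sepCount (T : Y → Y) (hε : 0 < ε) (n : ℕ) :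
    ∃ (E : Finset Y) (κ : Y → E), E.card = sepCount T ε n ∧
      ∀ y, ∀ k < n, dist (T^[k] y) (T^[k] (κ y)) ≤ ε := by
  classical
  obtain ⟨E, hE, hcard⟩ : sepCount T ε n ∈ {m | ∃ E : Finset Y, IsSeparated T ε n E ∧ E.card = m} :=
    Nat.sSup_mem ⟨0, ∅, isSeparated_empty, rfl⟩ (bddAbove_sepCounts hε n)
  suffices h : ∀ y : Y, ∃ w : E, ∀ k < n, dist (T^[k] y) (T^[k] w.1) ≤ ε by
    choose κ hκ using h
    exact ⟨E, κ, hcard, hκ⟩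
  intro y
  by_contra! hfar
  have hy : y ∉ E := fun hy => by
    obtain ⟨k, -, hk⟩ := hfar ⟨y, hy⟩
    simp only [dist_self] at hk
    linarith
  have hsep : IsSeparated T ε n ↑(insert y E) := by
    intro a ha b hb hab
    simp only [Finset.coe_insert, Set.mem_insert_iff, Finset.mem_coe] at ha hb
    rcases ha with rfl | ha <;> rcases hb with rfl | hb
    · exact absurd rfl hab
    · exact hfar ⟨b, hb⟩
    · exact (hfar ⟨a, ha⟩).imp fun k ⟨hk, h⟩ => ⟨hk, by rwa [dist_comm]⟩
    · exact hE a ha b hb hab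
  have := hsep.card_le_sepCount hε
  rw [Finset.card_insert_of_notMem hy] at this
  exact (Nat.lt_succ_self _).not_ge (hcard ▸ this)

lemma exists_log_sepCount_div_le (T : Y → Y) (hε : 0 < ε) :
    ∃ B : ℝ, ∀ n : ℕ, Real.log (sepCount T ε n) / n ≤ B := by
  obtain ⟨N, hN⟩ := exists_sepCount_le_pow T hε
  refine ⟨Real.log N, fun n => div_le_of_le_mul₀ n.cast_nonneg (Real.log_natCast_nonneg N) ?_⟩
  calc Real.log (sepCount T ε n) ≤ Real.log ((N ^ n : ℕ) : ℝ) := Real.log_natCast_mono (hN n)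
    _ = Real.log N * n := by rw [Nat.cast_pow, Real.log_pow, mul_comm]

end Separated

section Entropy

variable {Y : Type*} [MetricSpace Y] [CompactSpace Y] {T : Y → Y} {ε : ℝ}

lemma entSep_le_of_isometry_semiconj {Z : Type*} [MetricSpace Z] {S : Z → Z} {φ : Z → Y}
    (hφ : Isometry φ) (hST : Semiconj φ S T) (hε : 0 < ε) : entSep S ε ≤ entSep T ε := by
  classical
  have hcount : ∀ n, sepCount S ε n ≤ sepCount T ε n := fun n =>
    sepCount_le_of_forall_card_le fun E hE => by
      rw [← Finset.card_image_of_injective E hφ.injective]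
      exact IsSeparated.card_le_sepCount hε (by simpa using hE.image hφ hST)
  obtain ⟨B, hB⟩ := exists_log_sepCount_div_le T hε
  exact limsup_le_limsup (Eventually.of_forall fun n =>
      div_le_div_of_nonneg_right (Real.log_natCast_mono (hcount n)) n.cast_nonneg)
    (isBoundedUnder_of ⟨0, log_sepCount_div_nonneg S ε⟩).isCoboundedUnder_le
    (isBoundedUnder_of ⟨B, hB⟩)

/-- `sepCount` is monotone in the length, so its values at multiples of `m` suffice. -/
lemma entSep_le_of_sepCount_mul_le (hε : 0 < ε) {m C L : ℕ} (hm : 1 ≤ m) (hC : 0 < C)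
    (hL : 0 < L) (h : ∀ b, sepCount T ε (b * m) ≤ C * L ^ b) :
    entSep T ε ≤ Real.log L / m := by
  refine limsup_le_of_le_add_div (K := Real.log C + Real.log L)
    (log_sepCount_div_nonneg T ε) fun n hn => ?_
  have hn' : (0 : ℝ) < n := by exact_mod_cast hn
  have hcount : sepCount T ε n ≤ C * L ^ (n / m + 1) :=
    (sepCount_mono_length hε (Nat.lt_div_mul_add hm).le).trans_eq (by rw [← Nat.succ_mul])
      |>.trans (h _)
  have hdiv : ((n / m + 1 : ℕ) : ℝ) ≤ n / m + 1 := by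
    push_cast
    linarith [Nat.cast_div_le (α := ℝ) (m := n) (n := m)]
  have hlog : Real.log (sepCount T ε n) ≤ Real.log C + (n / m + 1) * Real.log L :=
    calc Real.log (sepCount T ε n) ≤ Real.log ((C * L ^ (n / m + 1) : ℕ) : ℝ) :=
          Real.log_natCast_mono hcount
      _ = Real.log C + ((n / m + 1 : ℕ) : ℝ) * Real.log L := by
          rw [Nat.cast_mul, Nat.cast_pow, Real.log_mul (by positivity) (by positivity),
            Real.log_pow]
      _ ≤ Real.log C + (n / m + 1) * Real.log L := by gcongr
  rw [div_le_iff₀ hn']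
  calc Real.log (sepCount T ε n) ≤ Real.log C + (n / m + 1) * Real.log L := hlog
    _ = (Real.log L / m + (Real.log C + Real.log L) / n) * n := by field_simp; ring

lemma le_entSep_of_le_log_succ_div (hε : 0 < ε) {c : ℝ}
    (h : ∀ m : ℕ, 1 ≤ m → c ≤ Real.log (sepCount T ε m + 1) / m) : c ≤ entSep T ε := by
  obtain ⟨B, hB⟩ := exists_log_sepCount_div_le T hε
  refine le_limsup_of_le_add_div (K := Real.log 2) hB fun m hm => ?_
  calc c ≤ Real.log (sepCount T ε m + 1) / m := h m hm
    _ ≤ (Real.log 2 + Real.log (sepCount T ε m)) / m := by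
        gcongr
        exact Real.log_natCast_succ_le _
    _ = Real.log (sepCount T ε m) / m + Real.log 2 / m := by ring

end Entropy

section Closing

def ClosingProperty {X : Type*} [MetricSpace X] (f : X → X) : Prop :=
  ∀ ε : ℝ, 0 < ε → ∃ δ : ℝ, 0 < δ ∧ δ < ε ∧ ∀ (x : X) (n : ℕ), 1 ≤ n →
    dist x (f^[n] x) < δ → ∃ p : X, f^[n] p = p ∧ dist p x ≤ ε

variable {X : Type*} [MetricSpace X] [CompactSpace X] {f : X → X}

lemma ClosingProperty.exists_card_le (hf : ClosingProperty f) {η : ℝ} (hη : 0 < η) :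
    ∃ r : ℕ, ∀ (x : X) (s : Finset ℕ),
      (∀ k ∈ s, f^[k] x ∉ Metric.thickening η (periodicPts f)) → s.card ≤ r := by
  obtain ⟨δ, hδ, -, hclose⟩ := hf (η / 2) (half_pos hη)
  obtain ⟨A, c, hc⟩ := exists_finset_dist_lt (Y := X) (half_pos hδ)
  refine ⟨A.card, fun x s hs => ?_⟩
  have hne : ∀ a ∈ s, ∀ b, a < b → c (f^[a] x) ≠ c (f^[b] x) := by
    intro a ha b hab hcab
    have hd : dist (f^[a] x) (f^[b - a] (f^[a] x)) < δ := by
      rw [← iterate_add_apply, Nat.sub_add_cancel hab.le]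
      have hx := hc (f^[a] x)
      rw [hcab] at hx
      linarith [hc (f^[b] x), dist_triangle_right (f^[a] x) (f^[b] x) (c (f^[b] x))]
    obtain ⟨p, hp, hpd⟩ := hclose _ (b - a) (by omega) hd
    refine hs a ha (Metric.mem_thickening_iff.2 ⟨p, ⟨b - a, by omega, hp⟩, ?_⟩)
    rw [dist_comm]
    linarith
  have hinj : Set.InjOn (fun k => c (f^[k] x)) s := by
    intro a ha b hb hab
    by_contra hne'
    rcases Nat.lt_or_gt_of_ne hne' with h | h
    exacts [hne a ha b h hab, hne b hb a h hab.symm]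
  exact (Finset.card_le_card_of_injOn _ (fun _ _ => Finset.mem_univ _) hinj).trans_eq
    (Finset.card_univ.trans (Fintype.card_coe A))

lemma exists_pos_forall_dist_iterate_lt (hf : Continuous f) (m : ℕ) {ε : ℝ} (hε : 0 < ε) :
    ∃ η > 0, ∀ y z : X, dist y z < η → ∀ i < m, dist (f^[i] y) (f^[i] z) < ε := by
  have hu : UniformContinuous fun y : X => fun i : Fin m => f^[i] y :=
    CompactSpace.uniformContinuous_of_continuous (continuous_pi fun i => hf.iterate i)
  obtain ⟨η, hη, h⟩ := Metric.uniformContinuous_iff.1 hu ε hε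
  exact ⟨η, hη, fun y z hyz i hi => (dist_pi_lt_iff hε).1 (h hyz) ⟨i, hi⟩⟩

end Closing

section Restriction

variable {X : Type*} [MetricSpace X] [CompactSpace X] {f : X → X} {P : Set X} {g : P → P}

/-- Near `P`, orbit segments of `f` are shadowed by orbit segments in `P`, so a spanning set
of `g` codes them; `none` marks the points away from `P`. -/
lemma exists_code_of_mem_thickening [CompactSpace P] (hf : Continuous f)
    (hg : Semiconj Subtype.val g f) {ε : ℝ} (hε : 0 < ε) (m : ℕ) :
    ∃ η > 0, ∃ (E : Finset P) (ν : X → Option E), E.card = sepCount g ε m ∧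
      (∀ y, ν y = none ↔ y ∉ Metric.thickening η P) ∧
      ∀ y y', ν y = ν y' → ν y ≠ none → ∀ i < m, dist (f^[i] y) (f^[i] y') ≤ 4 * ε := by
  classical
  obtain ⟨η, hη, hshadow⟩ := exists_pos_forall_dist_iterate_lt hf m hε
  obtain ⟨E, κ, hE, hκ⟩ := exists_finset_card_eq_sepCount g hε m
  have hκ' : ∀ (z : P), ∀ i < m, dist (f^[i] z) (f^[i] (κ z : P)) ≤ ε := fun z i hi => by
    simpa [Subtype.dist_eq, (hg.iterate_right i).eq] using hκ z i hi
  have hnear : ∀ y ∈ Metric.thickening η P, ∃ q : P, ∀ i < m, dist (f^[i] y) (f^[i] q) < ε := by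
    intro y hy
    obtain ⟨q, hq, hyq⟩ := Metric.mem_thickening_iff.1 hy
    exact ⟨⟨q, hq⟩, hshadow y q hyq⟩
  choose q hq using hnear
  let ν : X → Option E := fun y =>
    if hy : y ∈ Metric.thickening η P then some (κ (q y hy)) else none
  have hν_none : ∀ y, ν y = none ↔ y ∉ Metric.thickening η P := fun y => by
    by_cases hy : y ∈ Metric.thickening η P <;> simp [ν, hy]
  refine ⟨η, hη, E, ν, hE, hν_none, fun y y' hyy' hy i hi => ?_⟩
  have hy' : ν y' ≠ none := hyy' ▸ hy
  rw [Ne, hν_none, not_not] at hy hy'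
  simp only [ν, dif_pos hy, dif_pos hy', Option.some.injEq] at hyy'
  have h₁ := hκ' (q y hy) i hi
  rw [hyy'] at h₁
  linarith [hq y hy i hi, hq y' hy' i hi, hκ' (q y' hy') i hi,
    dist_triangle4 (f^[i] y) (f^[i] (q y hy : X)) (f^[i] (κ (q y' hy') : X)) (f^[i] y'),
    dist_triangle_right (f^[i] (κ (q y' hy') : X)) (f^[i] y') (f^[i] (q y' hy' : X)),
    dist_comm (f^[i] (q y' hy' : X)) (f^[i] (κ (q y' hy') : X))]

lemma exists_sepCount_mul_le [CompactSpace P] (hf : Continuous f) (hcl : ClosingProperty f)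
    (hP : periodicPts f ⊆ P) (hg : Semiconj Subtype.val g f) {ε : ℝ} (hε : 0 < ε) {m : ℕ}
    (hm : 1 ≤ m) :
    ∃ C : ℕ, 0 < C ∧ ∀ b, sepCount f (4 * ε) (b * m) ≤ C * (sepCount g ε m + 1) ^ b := by
  classical
  obtain ⟨η, hη, EP, ν, hEP, hν_none, hν⟩ := exists_code_of_mem_thickening hf hg hε m
  obtain ⟨r, hr⟩ := hcl.exists_card_le hη
  obtain ⟨EX, κX, -, hκX⟩ := exists_finset_card_eq_sepCount f hε m
  refine ⟨(EX.card + 1) ^ r, by positivity, fun b => sepCount_le_of_forall_card_le fun E hE => ?_⟩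
  let near : X → Fin b → Option EP := fun x j => ν (f^[j * m] x)
  let far : X → Finset (Fin b) := fun x => {j | near x j = none}
  have hfar : ∀ x, (far x).card ≤ r := fun x => by
    have hinj : Injective fun j : Fin b => j.1 * m :=
      fun a b h => Fin.ext (Nat.eq_of_mul_eq_mul_right hm h)
    rw [← Finset.card_image_of_injective _ hinj]
    refine hr x _ fun k hk hmem => ?_
    obtain ⟨j, hj, rfl⟩ := Finset.mem_image.1 hk
    have hj : near x j = none := by simpa [far] using hj
    exact (hν_none _).1 hj (Metric.thickening_subset_of_subset η hP hmem)
  let Φ : X → (Fin r → Option EX) × (Fin b → Option EP) := fun x =>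
    (sortedValues r (far x) fun j => κX (f^[j * m] x), near x)
  have hΦ : ∀ x y, Φ x = Φ y → ∀ k < b * m, dist (f^[k] x) (f^[k] y) ≤ 4 * ε := by
    intro x y hxy
    obtain ⟨hfarxy, hnearxy⟩ := Prod.mk.inj hxy
    refine forall_lt_mul_of_forall_blocks fun j hj i hi => ?_
    rw [iterate_add_apply, iterate_add_apply]
    by_cases hjx : near x ⟨j, hj⟩ = none
    · have hD : far y = far x := by simp only [far, hnearxy]
      rw [hD] at hfarxy
      have hlabel := eqOn_of_sortedValues_eq (hfar x) hfarxy (by simpa [far] using hjx)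
      have h₁ := hκX (f^[j * m] x) i hi
      rw [show κX (f^[j * m] x) = κX (f^[j * m] y) from hlabel] at h₁
      linarith [hκX (f^[j * m] y) i hi,
        dist_triangle_right (f^[i] (f^[j * m] x)) (f^[i] (f^[j * m] y))
          (f^[i] (κX (f^[j * m] y) : X))]
    · exact hν _ _ (congrFun hnearxy ⟨j, hj⟩) hjx i hi
  simpa [hEP] using hE.card_le_card_of_code Φ hΦ

lemma entSep_le_of_closingProperty [CompactSpace P] (hf : Continuous f)
    (hcl : ClosingProperty f) (hP : periodicPts f ⊆ P) (hg : Semiconj Subtype.val g f) {ε : ℝ}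
    (hε : 0 < ε) : entSep f (4 * ε) ≤ entSep g ε := by
  refine le_entSep_of_le_log_succ_div hε fun m hm => ?_
  obtain ⟨C, hC, hcount⟩ := exists_sepCount_mul_le hf hcl hP hg hε hm
  exact_mod_cast entSep_le_of_sepCount_mul_le (by positivity) hm hC (Nat.succ_pos _) hcount

end Restriction

/-- With the closing property, `h_top(f)` equals the entropy of the restriction of `f`
to the closure of the set of periodic points. -/
theorem stmt4 {X : Type*} [MetricSpace X] [CompactSpace X] (f : X ≃ₜ X)
    (hclose : ∀ ε : ℝ, 0 < ε → ∃ δ : ℝ, 0 < δ ∧ δ < ε ∧ ∀ (x : X) (n : ℕ), 1 ≤ n →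
      dist x ((⇑f)^[n] x) < δ → ∃ p : X, (⇑f)^[n] p = p ∧ dist p x ≤ ε)
    (P : Set X) (hP : P = closure {p : X | ∃ n : ℕ, 1 ≤ n ∧ (⇑f)^[n] p = p})
    (g : P → P) (hg : ∀ x : P, ((g x : X)) = f (x : X)) :
    topEnt ⇑f = topEnt g := by
  have hper : periodicPts f ⊆ P := hP ▸ subset_closure
  have : CompactSpace P := isCompact_iff_compactSpace.mp (hP ▸ isClosed_closure).isCompact
  refine Real.iSup_eq_iSup_of_forall_exists_le (fun e => ⟨⟨e.1 / 4, div_pos e.2 four_pos⟩, ?_⟩)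
    fun e => ⟨e, entSep_le_of_isometry_semiconj isometry_subtype_coe hg e.2⟩
  simpa [mul_div_cancel₀] using
    entSep_le_of_closingProperty f.continuous hclose hper hg (div_pos e.2 four_pos)
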